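/- arXiv:2106.13983 — 3 statements merged into one kernel-verified Lean document; each statement's English description precedes it below -/
import Mathlib

section
/- For every positive integer k and every positive integer n, φ_k(n) = φ(n)^k · ∏_{p | n} (1 − 1/(p−1) + 1/(p−1)² + ⋯ + (−1)^{k−1}/(p−1)^{k−1}), where the product runs over prime divisors p of n. -/
/-!
Reduction mod `n` identifies `φ_k(n)` with the number `N_k(ZMod n)` of `k`-tuples of units whose
sum is a unit. By the Chinese remainder theorem `N_k` is multiplicative in `n`. The reduction
`ZMod (p ^ m) → ZMod p` is a local homomorphism, so unit tuples with unit sum are exactly the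
preimages of such tuples mod `p`, and each fibre has `p ^ ((m - 1) k)` elements. Over the field
`ZMod p`, a tuple of units has either unit or zero sum, and the zero-sum `(k + 1)`-tuples are the
`k`-tuples with unit sum extended by minus their sum; hence `N_{k+1} + N_k = (p - 1) ^ (k + 1)`,
whose solution with `N_0 = 0` is `(p - 1) ^ k ∑_{j<k} (-1) ^ j / (p - 1) ^ j`.
-/

/-- The `k`-dimensional generalized Euler function `φ_k(n)`. -/
def tothPhi (k n : ℕ) : ℕ :=
  ((Fintype.piFinset fun _ : Fin k => Finset.Icc 1 n).filter
    (fun a => Nat.gcd (∏ i, a i) n = 1 ∧ Nat.gcd (∑ i, a i) n = 1)).card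

open Finset

def unitSumTuples (R : Type*) [Semiring R] (k : ℕ) : Set (Fin k → R) :=
  {a | (∀ i, IsUnit (a i)) ∧ IsUnit (∑ i, a i)}

section

variable {R S : Type*} [Semiring R] [Semiring S]

theorem unitSumTuples_zero [Nontrivial R] : unitSumTuples R 0 = ∅ := by
  simp [unitSumTuples]

theorem preimage_unitSumTuples (f : R →+* S) [IsLocalHom f] (k : ℕ) :
    (fun a => f ∘ a) ⁻¹' unitSumTuples S k = unitSumTuples R k := by
  ext a
  simp [unitSumTuples, ← map_sum, isUnit_map_iff]

theorem Nat.card_unitSumTuples_congr (e : R ≃+* S) (k : ℕ) :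
    Nat.card (unitSumTuples R k) = Nat.card (unitSumTuples S k) := by
  rw [← preimage_unitSumTuples (e : R →+* S)]
  refine Nat.card_preimage_of_injective (fun a b h => ?_) fun b _ => ⟨e.symm ∘ b, ?_⟩
  · exact funext fun i => e.injective (congrFun h i)
  · ext i; simp

def unitSumTuplesProdEquiv (k : ℕ) :
    unitSumTuples (R × S) k ≃ unitSumTuples R k × unitSumTuples S k :=
  (Equiv.subtypeEquiv (Equiv.arrowProdEquivProdArrow _ _ _) fun a => by
    simp only [unitSumTuples, Set.mem_ofPred_eq, Prod.isUnit_iff, Prod.fst_sum, Prod.snd_sum,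
      forall_and]
    tauto).trans Equiv.subtypeProdEquivProd

theorem Nat.card_unitSumTuples_prod (k : ℕ) :
    Nat.card (unitSumTuples (R × S) k) =
      Nat.card (unitSumTuples R k) * Nat.card (unitSumTuples S k) := by
  rw [Nat.card_congr (unitSumTuplesProdEquiv k), Nat.card_prod]

end

theorem AddMonoidHom.card_preimage_of_surjective {G H : Type*} [AddGroup G] [AddGroup H]
    {f : G →+ H} (hf : Function.Surjective f) (t : Set H) :
    Nat.card (f ⁻¹' t) = Nat.card f.ker * Nat.card t := by
  let e := QuotientAddGroup.quotientKerEquivOfSurjective f hf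
  change Nat.card (QuotientAddGroup.mk ⁻¹' (e ⁻¹' t)) = _
  rw [Nat.card_congr (QuotientAddGroup.preimageMkEquivAddSubgroupProdSet _ _), Nat.card_prod,
    Nat.card_preimage_of_injective e.injective (by simp [e.surjective.range_eq])]

theorem Nat.card_unitSumTuples_mul_card_pow {R S : Type*} [Ring R] [Ring S] (f : R →+* S)
    [IsLocalHom f] (hf : Function.Surjective f) (k : ℕ) :
    Nat.card (unitSumTuples R k) * Nat.card S ^ k =
      Nat.card R ^ k * Nat.card (unitSumTuples S k) := by
  let F := AddMonoidHom.compLeft (f : R →+ S) (Fin k)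
  have hF : Function.Surjective F := hf.comp_left
  have hR := F.card_preimage_of_surjective hF Set.univ
  have hU := F.card_preimage_of_surjective hF (unitSumTuples S k)
  rw [Set.preimage_univ, Nat.card_univ, Nat.card_univ, Nat.card_fun, Nat.card_fun,
    Nat.card_eq_fintype_card (α := Fin k), Fintype.card_fin] at hR
  change Nat.card ((fun a => f ∘ a) ⁻¹' _) = _ at hU
  rw [preimage_unitSumTuples] at hU
  rw [hU, hR]
  ring

def zeroSumUnitTuplesEquiv {R : Type*} [Ring R] (k : ℕ) :
    {a : Fin (k + 1) → R // (∀ i, IsUnit (a i)) ∧ ∑ i, a i = 0} ≃ unitSumTuples R k where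
  toFun a := ⟨Fin.init a.1, fun i => a.2.1 _, by
    have h := a.2.2
    rw [Fin.sum_univ_castSucc, add_eq_zero_iff_eq_neg] at h
    simpa [Fin.init, h] using (a.2.1 (Fin.last k)).neg⟩
  invFun b := ⟨Fin.snoc b.1 (-∑ i, b.1 i),
    fun i => Fin.lastCases (by simp only [Fin.snoc_last]; exact b.2.2.neg)
      (fun j => by simp only [Fin.snoc_castSucc]; exact b.2.1 j) i,
    by simp [Fin.sum_univ_castSucc]⟩
  left_inv a := by
    have h : -∑ i, Fin.init a.1 i = a.1 (Fin.last k) := by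
      have h := a.2.2
      rwa [Fin.sum_univ_castSucc, add_eq_zero_iff_neg_eq] at h
    ext1
    simp only [h, Fin.snoc_init_self]
  right_inv b := Subtype.ext (Fin.init_snoc (α := fun _ => R) _ _)

theorem Nat.card_unitSumTuples_succ_add {F : Type*} [DivisionRing F] [Finite F] (k : ℕ) :
    Nat.card (unitSumTuples F (k + 1)) + Nat.card (unitSumTuples F k) =
      Nat.card Fˣ ^ (k + 1) := by
  let A : Set (Fin (k + 1) → F) := {a | ∀ i, a i ≠ 0}
  let P : Set (Fin (k + 1) → F) := {a | ∑ i, a i ≠ 0}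
  have hU : unitSumTuples F (k + 1) = A ∩ P := by
    ext a; simp [unitSumTuples, A, P, isUnit_iff_ne_zero]
  have hZ : Nat.card (unitSumTuples F k) = Nat.card ↥(A \ P) :=
    (Nat.card_congr (zeroSumUnitTuplesEquiv k)).symm.trans
      (Nat.card_congr (Equiv.subtypeEquivRight fun a => by simp [A, P, isUnit_iff_ne_zero]))
  have hA : Nat.card A = Nat.card Fˣ ^ (k + 1) := by
    let e : A ≃ (Fin (k + 1) → Fˣ) :=
      Equiv.subtypePiEquivPi.trans (Equiv.piCongrRight fun _ => unitsEquivNeZero.symm)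
    rw [Nat.card_congr e, Nat.card_fun, Nat.card_eq_fintype_card (α := Fin (k + 1)),
      Fintype.card_fin]
  rw [hU, hZ, ← hA]
  exact Set.ncard_inter_add_ncard_sdiff_eq_ncard A P

theorem eq_pow_mul_sum_of_add_succ_eq_pow {K : Type*} [Field K] {x : K} (hx : x ≠ 0)
    {u : ℕ → K} (h0 : u 0 = 0) (hsucc : ∀ k, u (k + 1) + u k = x ^ (k + 1)) (k : ℕ) :
    u k = x ^ k * ∑ j ∈ range k, (-1) ^ j / x ^ j := by
  induction k with
  | zero => simp [h0]
  | succ k ih =>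
    have hterm : ∀ j, x ^ (k + 1) * ((-1) ^ (j + 1) / x ^ (j + 1)) =
        -(x ^ k * ((-1) ^ j / x ^ j)) := fun j => by
      field_simp
      ring
    rw [eq_sub_of_add_eq (hsucc k), ih, sum_range_succ', mul_add, mul_sum, mul_sum]
    simp only [hterm, sum_neg_distrib]
    ring

namespace ZMod

theorem natCast_val_sub_one_add_one {n : ℕ} [NeZero n] (z : ZMod n) :
    (((z - 1).val + 1 : ℕ) : ZMod n) = z := by
  push_cast
  rw [natCast_zmod_val, sub_add_cancel]

theorem val_natCast_sub_one_add_one {n x : ℕ} (h1 : 1 ≤ x) (hx : x ≤ n) :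
    ((x : ZMod n) - 1).val + 1 = x := by
  rw [← Nat.cast_pred h1, val_natCast, Nat.mod_eq_of_lt (by omega)]
  omega

theorem natCast_mem_unitSumTuples_iff {n k : ℕ} (a : Fin k → ℕ) :
    (fun i => (a i : ZMod n)) ∈ unitSumTuples (ZMod n) k ↔
      (∏ i, a i).gcd n = 1 ∧ (∑ i, a i).gcd n = 1 := by
  simp only [unitSumTuples, Set.mem_ofPred_eq, ← Nat.cast_sum, isUnit_iff_coprime,
    ← Nat.coprime_iff_gcd_eq_one, Nat.coprime_prod_left_iff, mem_univ, forall_const]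

theorem isLocalHom_castHom_prime_pow {p : ℕ} (hp : p.Prime) {m : ℕ} (hm : m ≠ 0) :
    IsLocalHom (castHom (dvd_pow_self p hm) (ZMod p)) := by
  have : NeZero (p ^ m) := ⟨pow_ne_zero m hp.ne_zero⟩
  refine ⟨fun x hx => ?_⟩
  rw [← natCast_zmod_val x, map_natCast, isUnit_iff_coprime] at hx
  rw [← natCast_zmod_val x, isUnit_iff_coprime, Nat.coprime_pow_right_iff (Nat.pos_of_ne_zero hm)]
  exact hx

end ZMod

theorem tothPhi_eq_card_unitSumTuples (k : ℕ) {n : ℕ} (hn : n ≠ 0) :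
    tothPhi k n = Nat.card (unitSumTuples (ZMod n) k) := by
  have : NeZero n := ⟨hn⟩
  rw [tothPhi, ← Set.ncard_coe_finset]
  -- `z ↦ (z - 1).val + 1` picks the representative of `z` in `[1, n]`
  refine Set.BijOn.ncard_eq (f := fun a i => (a i : ZMod n))
    (Set.InvOn.bijOn (f' := fun z i => (z i - 1).val + 1) ⟨fun a ha => ?_, fun z _ => ?_⟩
      (fun a ha => ?_) fun z hz => ?_)
  · simp only [coe_filter, Fintype.mem_piFinset, mem_Icc, Set.mem_ofPred_eq] at ha
    exact funext fun i => ZMod.val_natCast_sub_one_add_one (ha.1 i).1 (ha.1 i).2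
  · exact funext fun i => ZMod.natCast_val_sub_one_add_one (z i)
  · simp only [coe_filter, Fintype.mem_piFinset, Set.mem_ofPred_eq] at ha
    exact (ZMod.natCast_mem_unitSumTuples_iff a).2 ha.2
  · simp only [coe_filter, Fintype.mem_piFinset, mem_Icc, Set.mem_ofPred_eq]
    refine ⟨fun i => ⟨by omega, Nat.succ_le_of_lt (z i - 1).val_lt⟩, ?_⟩
    rw [← ZMod.natCast_mem_unitSumTuples_iff]
    simpa only [ZMod.natCast_val_sub_one_add_one] using hz

theorem Nat.card_unitSumTuples_zmod_prime {p : ℕ} (hp : p.Prime) (k : ℕ) :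
    (Nat.card (unitSumTuples (ZMod p) k) : ℚ) =
      ((p : ℚ) - 1) ^ k * ∑ j ∈ range k, (-1 : ℚ) ^ j / ((p : ℚ) - 1) ^ j := by
  have : Fact p.Prime := ⟨hp⟩
  have hunits : ((Nat.card (ZMod p)ˣ : ℕ) : ℚ) = (p : ℚ) - 1 := by
    rw [Nat.card_units, Nat.card_zmod, Nat.cast_pred hp.pos]
  refine eq_pow_mul_sum_of_add_succ_eq_pow
    (u := fun k => (Nat.card (unitSumTuples (ZMod p) k) : ℚ))
    (by linarith [show (2 : ℚ) ≤ p by exact_mod_cast hp.two_le]) (by simp [unitSumTuples_zero])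
    (fun k => ?_) k
  rw [← hunits]
  exact_mod_cast Nat.card_unitSumTuples_succ_add k

theorem Nat.card_unitSumTuples_zmod_prime_pow {p : ℕ} (hp : p.Prime) {m : ℕ} (hm : m ≠ 0)
    (k : ℕ) :
    (Nat.card (unitSumTuples (ZMod (p ^ m)) k) : ℚ) =
      (Nat.totient (p ^ m) : ℚ) ^ k *
        ∑ j ∈ range k, (-1 : ℚ) ^ j / ((p : ℚ) - 1) ^ j := by
  have := ZMod.isLocalHom_castHom_prime_pow hp hm
  have hcard := Nat.card_unitSumTuples_mul_card_pow _
    (ZMod.castHom_surjective (dvd_pow_self p hm)) k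
  rw [Nat.card_zmod, Nat.card_zmod] at hcard
  have hcardℚ : (Nat.card (unitSumTuples (ZMod (p ^ m)) k) : ℚ) * (p : ℚ) ^ k =
      ((p : ℚ) ^ m) ^ k * Nat.card (unitSumTuples (ZMod p) k) := by
    exact_mod_cast hcard
  obtain ⟨e, rfl⟩ : ∃ e, m = e + 1 := ⟨m - 1, by omega⟩
  rw [Nat.card_unitSumTuples_zmod_prime hp] at hcardℚ
  rw [Nat.totient_prime_pow_succ hp, Nat.cast_mul, Nat.cast_pow, Nat.cast_pred hp.pos, mul_pow]
  refine mul_right_cancel₀ (pow_ne_zero k (Nat.cast_ne_zero.2 hp.ne_zero)) (hcardℚ.trans ?_)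
  ring

theorem Nat.card_unitSumTuples_zmod_mul {a b : ℕ} (hab : a.Coprime b) (k : ℕ) :
    Nat.card (unitSumTuples (ZMod (a * b)) k) =
      Nat.card (unitSumTuples (ZMod a) k) * Nat.card (unitSumTuples (ZMod b) k) := by
  rw [Nat.card_unitSumTuples_congr (ZMod.chineseRemainder hab), Nat.card_unitSumTuples_prod]

theorem tothPhi_one (k : ℕ) : tothPhi k 1 = 1 := by
  rw [tothPhi, filter_true_of_mem fun a _ => ⟨Nat.gcd_one_right _, Nat.gcd_one_right _⟩]
  simp

theorem tothPhi_formula_general (k n : ℕ) (hn : 0 < n) :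
    (tothPhi k n : ℚ) = (Nat.totient n : ℚ) ^ k *
      ∏ p ∈ n.primeFactors, ∑ j ∈ Finset.range k, (-1 : ℚ) ^ j / ((p : ℚ) - 1) ^ j := by
  induction n using Nat.recOnPosPrimePosCoprime with
  | zero => exact absurd hn (lt_irrefl 0)
  | one => simp [tothPhi_one]
  | prime_pow p m hp hm =>
    rw [tothPhi_eq_card_unitSumTuples k hn.ne', Nat.card_unitSumTuples_zmod_prime_pow hp hm.ne',
      Nat.primeFactors_prime_pow hm.ne' hp, prod_singleton]
  | coprime a b ha hb hab iha ihb =>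
    rw [tothPhi_eq_card_unitSumTuples k hn.ne', Nat.card_unitSumTuples_zmod_mul hab,
      Nat.cast_mul, ← tothPhi_eq_card_unitSumTuples k (by omega),
      ← tothPhi_eq_card_unitSumTuples k (by omega), iha (by omega), ihb (by omega),
      Nat.totient_mul hab, Nat.primeFactors_mul (by omega) (by omega),
      prod_union hab.disjoint_primeFactors]
    push_cast
    ring

/-- `φ_k(n) = φ(n)^k · ∏_{p ∣ n} (1 − 1/(p−1) + ⋯ + (−1)^{k−1}/(p−1)^{k−1})`. -/
theorem tothPhi_formula (k n : ℕ) (hk : 0 < k) (hn : 0 < n) :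
    (tothPhi k n : ℚ) = (Nat.totient n : ℚ) ^ k *
      ∏ p ∈ n.primeFactors, ∑ j ∈ Finset.range k, (-1 : ℚ) ^ j / ((p : ℚ) - 1) ^ j :=
  tothPhi_formula_general k n hn
end

section
/- For every positive integers k and n, ∑_{(a₁,…,a_k): 1≤aᵢ≤n, gcd(a₁⋯a_k,n)=1, gcd(a₁+⋯+a_k,n)=1} gcd(a₁+⋯+a_k−1, n) = φ_k(n)·σ₀(n). -/
/-!
Reducing mod `n`, the tuples in question become the tuples over `ZMod n` whose product and sum
are units. Writing `gcd (m, n) = ∑_{d ∣ n, d ∣ m} φ d`, the identity says that for every `d ∣ n`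
exactly a `1 / φ d` fraction of these tuples has sum `≡ 1 (mod d)`. This is an equidistribution
statement: multiplying a tuple by a unit `c` of `ZMod n` preserves the set and multiplies the sum
by `c`, and the units of `ZMod n` surject onto those of `ZMod d`, so the sum mod `d` takes every
unit value equally often.
-/

open Finset

theorem Nat.gcd_eq_sum_totient_filter (m : ℕ) {n : ℕ} (hn : n ≠ 0) :
    m.gcd n = ∑ d ∈ n.divisors with d ∣ m, d.totient := by
  conv_lhs => rw [← Nat.sum_totient (m.gcd n)]
  congr 1
  ext d
  simp only [Nat.mem_divisors, mem_filter, Nat.dvd_gcd_iff, ne_eq, Nat.gcd_eq_zero_iff, hn,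
    and_false, not_false_eq_true]
  tauto

section UnitTuples

variable (ι R : Type*) [Fintype ι] [DecidableEq ι] [CommRing R] [Fintype R]

open scoped Classical in
noncomputable def unitTuples : Finset (ι → R) :=
  {f | IsUnit (∏ i, f i) ∧ IsUnit (∑ i, f i)}

variable {ι R}

theorem mem_unitTuples {f : ι → R} :
    f ∈ unitTuples ι R ↔ IsUnit (∏ i, f i) ∧ IsUnit (∑ i, f i) := by
  simp [unitTuples]

theorem unit_mul_mem_unitTuples (c : Rˣ) {f : ι → R} (hf : f ∈ unitTuples ι R) :
    (fun i => (c : R) * f i) ∈ unitTuples ι R := by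
  rw [mem_unitTuples] at hf ⊢
  rw [prod_mul_distrib, prod_const, ← mul_sum]
  exact ⟨(c.isUnit.pow _).mul hf.1, c.isUnit.mul hf.2⟩

variable {S : Type*} [CommRing S] [DecidableEq S] (π : R →+* S)

theorem card_filter_map_sum_unitTuples_eq_of_isUnit
    (hπ : Function.Surjective (Units.map (π : R →* S))) {u : S} (hu : IsUnit u) :
    #{f ∈ unitTuples ι R | π (∑ i, f i) = u} = #{f ∈ unitTuples ι R | π (∑ i, f i) = 1} := by
  obtain ⟨c, hc⟩ := hπ hu.unit
  have hcu : π c = u := congrArg Units.val hc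
  have hcu_inv : π ↑c⁻¹ * u = 1 := by rw [← hcu, ← map_mul, Units.inv_mul, map_one]
  refine card_nbij' (fun f i => ((c⁻¹ : Rˣ) : R) * f i) (fun f i => (c : R) * f i)
    (fun f hf => ?_) (fun f hf => ?_) (fun f _ => by simp) (fun f _ => by simp)
  all_goals
    rw [mem_coe, mem_filter] at hf ⊢
    refine ⟨unit_mul_mem_unitTuples _ hf.1, ?_⟩
    rw [← mul_sum, map_mul, hf.2]
  · exact hcu_inv
  · rw [mul_one, hcu]

theorem card_unitTuples_eq_card_units_mul [Fintype Sˣ]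
    (hπ : Function.Surjective (Units.map (π : R →* S))) :
    #(unitTuples ι R) = Fintype.card Sˣ * #{f ∈ unitTuples ι R | π (∑ i, f i) = 1} := by
  have hmaps : ∀ f ∈ unitTuples ι R, π (∑ i, f i) ∈ univ.map ⟨Units.val, Units.val_injective⟩ :=
    fun f hf => mem_map_of_mem _ (mem_univ ((mem_unitTuples.mp hf).2.map π).unit)
  calc #(unitTuples ι R)
      _ = ∑ _u : Sˣ, #{f ∈ unitTuples ι R | π (∑ i, f i) = 1} := by
        rw [card_eq_sum_card_fiberwise hmaps, sum_map]
        exact sum_congr rfl fun u _ => card_filter_map_sum_unitTuples_eq_of_isUnit π hπ u.isUnit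
      _ = _ := by rw [sum_const, card_univ, smul_eq_mul]

theorem totient_mul_card_filter_dvd_val_sum_sub_one {n d : ℕ} [NeZero n] (hd : d ∣ n) :
    d.totient * #{f ∈ unitTuples ι (ZMod n) | d ∣ ((∑ i, f i) - 1).val} =
      #(unitTuples ι (ZMod n)) := by
  have : NeZero d := ⟨fun h => NeZero.ne n (Nat.eq_zero_of_zero_dvd (h ▸ hd))⟩
  have hdvd : ∀ x : ZMod n, d ∣ (x - 1).val ↔ ZMod.castHom hd (ZMod d) x = 1 := fun x => by
    rw [← ZMod.natCast_eq_zero_iff, ZMod.natCast_val, ← ZMod.castHom_apply, map_sub, map_one,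
      sub_eq_zero]
  rw [card_unitTuples_eq_card_units_mul _ (ZMod.unitsMap_surjective hd),
    ZMod.card_units_eq_totient]
  simp only [hdvd]

theorem sum_gcd_val_sum_sub_one_unitTuples (n : ℕ) [NeZero n] :
    ∑ f ∈ unitTuples ι (ZMod n), ((∑ i, f i) - 1).val.gcd n =
      #(unitTuples ι (ZMod n)) * n.divisors.card := by
  calc ∑ f ∈ unitTuples ι (ZMod n), ((∑ i, f i) - 1).val.gcd n
      _ = ∑ f ∈ unitTuples ι (ZMod n), ∑ d ∈ n.divisors,
            if d ∣ ((∑ i, f i) - 1).val then d.totient else 0 := by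
        simp only [Nat.gcd_eq_sum_totient_filter _ (NeZero.ne n), sum_filter]
      _ = ∑ d ∈ n.divisors,
            d.totient * #{f ∈ unitTuples ι (ZMod n) | d ∣ ((∑ i, f i) - 1).val} := by
        rw [sum_comm]
        simp only [← sum_filter, sum_const, smul_eq_mul, mul_comm]
      _ = ∑ _d ∈ n.divisors, #(unitTuples ι (ZMod n)) :=
        sum_congr rfl fun d hd =>
          totient_mul_card_filter_dvd_val_sum_sub_one (Nat.dvd_of_mem_divisors hd)
      _ = #(unitTuples ι (ZMod n)) * n.divisors.card := by rw [sum_const, smul_eq_mul, mul_comm]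

end UnitTuples

theorem ZMod.natCast_val_sub_one_add_one_s4 {n : ℕ} [NeZero n] (x : ZMod n) :
    (((x - 1).val + 1 : ℕ) : ZMod n) = x := by
  simp

theorem ZMod.val_natCast_sub_one_add_one_s4 {n a : ℕ} (h1 : 1 ≤ a) (h2 : a ≤ n) :
    ((a : ZMod n) - 1).val + 1 = a := by
  rw [← Nat.cast_one, ← Nat.cast_sub h1, ZMod.val_natCast, Nat.mod_eq_of_lt (by omega)]
  omega

theorem Nat.gcd_sub_one_eq_gcd_val {s n : ℕ} [NeZero n] (hs : s.Coprime n) :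
    (s - 1).gcd n = (((s : ZMod n) - 1).val).gcd n := by
  rcases s with _ | s
  · obtain rfl : n = 1 := Nat.coprime_zero_left _ |>.mp hs
    simp
  · rw [Nat.cast_succ, add_sub_cancel_right, ZMod.val_natCast, Nat.add_sub_cancel,
      Nat.gcd_comm, ← Nat.gcd_rec, Nat.gcd_comm]

section Transfer

variable {ι M : Type*} [Fintype ι] [DecidableEq ι] [AddCommMonoid M] {n : ℕ} [NeZero n]

theorem sum_piFinset_Icc_natCast (g : (ι → ZMod n) → M) :
    ∑ a ∈ Fintype.piFinset fun _ : ι => Icc 1 n, g (fun i => (a i : ZMod n)) = ∑ f, g f := by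
  refine sum_nbij' (fun a i => (a i : ZMod n)) (fun f i => (f i - 1).val + 1)
    (fun _ _ => mem_coe.mpr (mem_univ _)) (fun f _ => ?_) (fun a ha => ?_)
    (fun f _ => funext fun i => ZMod.natCast_val_sub_one_add_one_s4 (f i)) (fun _ _ => rfl)
  · exact Fintype.mem_piFinset.mpr fun i => mem_Icc.mpr ⟨Nat.le_add_left 1 _, ZMod.val_lt _⟩
  · have ha := fun i => mem_Icc.mp (Fintype.mem_piFinset.mp ha i)
    exact funext fun i => ZMod.val_natCast_sub_one_add_one_s4 (ha i).1 (ha i).2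

theorem sum_filter_coprime_piFinset_Icc (g : (ι → ZMod n) → M) :
    ∑ a ∈ (Fintype.piFinset fun _ : ι => Icc 1 n).filter
        (fun a => Nat.gcd (∏ i, a i) n = 1 ∧ Nat.gcd (∑ i, a i) n = 1),
      g (fun i => (a i : ZMod n)) = ∑ f ∈ unitTuples ι (ZMod n), g f := by
  rw [sum_filter, unitTuples, sum_filter, ← sum_piFinset_Icc_natCast]
  refine sum_congr rfl fun a _ => ?_
  simp only [← Nat.cast_prod, ← Nat.cast_sum, ZMod.isUnit_iff_coprime, Nat.Coprime]

end Transfer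

theorem toth_identity_general (k n : ℕ) (hn : 0 < n) :
    ∑ a ∈ (Fintype.piFinset fun _ : Fin k => Finset.Icc 1 n).filter
        (fun a => Nat.gcd (∏ i, a i) n = 1 ∧ Nat.gcd (∑ i, a i) n = 1),
      Nat.gcd ((∑ i, a i) - 1) n =
      tothPhi k n * n.divisors.card := by
  have : NeZero n := ⟨hn.ne'⟩
  have hphi : tothPhi k n = #(unitTuples (Fin k) (ZMod n)) := by
    simpa only [tothPhi, card_eq_sum_ones] using
      sum_filter_coprime_piFinset_Icc (ι := Fin k) (n := n) fun _ => 1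
  rw [hphi, ← sum_gcd_val_sum_sub_one_unitTuples, ← sum_filter_coprime_piFinset_Icc]
  refine sum_congr rfl fun a ha => ?_
  rw [Nat.gcd_sub_one_eq_gcd_val (mem_filter.mp ha).2.2, Nat.cast_sum]

/-- **Tóth's identity**: for all positive integers `k`, `n`,
`∑_{1 ≤ aᵢ ≤ n, gcd(a₁⋯a_k,n)=1, gcd(a₁+⋯+a_k,n)=1} gcd(a₁+⋯+a_k−1, n)
  = φ_k(n) · σ₀(n)`. -/
theorem toth_identity (k n : ℕ) (hk : 0 < k) (hn : 0 < n) :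
    ∑ a ∈ (Fintype.piFinset fun _ : Fin k => Finset.Icc 1 n).filter
        (fun a => Nat.gcd (∏ i, a i) n = 1 ∧ Nat.gcd (∑ i, a i) n = 1),
      Nat.gcd ((∑ i, a i) - 1) n =
      tothPhi k n * n.divisors.card :=
  toth_identity_general k n hn
end

section
/- Let K be a number field with ring of integers O_K and 𝔫 a nonzero ideal. Let 𝔞 be an ideal dividing 𝔫 and u ∈ O_K. Then the number of units a of O_K/𝔫 with a ≡ u (mod 𝔞) equals φ(𝔫)/φ(𝔞) if u is coprime to 𝔞, and 0 otherwise. -/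
/-!
The reduction map `(𝓞 K ⧸ 𝔫)ˣ → (𝓞 K ⧸ 𝔞)ˣ` is a surjective group homomorphism, because units
lift along any surjection out of a finite commutative ring: for `x` with `x ^ n = e` idempotent,
`x * e + (1 - e)` is a unit with the same image as `x` whenever `x` maps to a unit. The units
congruent to `u` form one of its fibres, of size `φ(𝔫)/φ(𝔞)`, when `u` is a unit mod `𝔞`;
otherwise no unit reduces to `u`.
-/

open NumberField

theorem exists_pow_isIdempotentElem {M : Type*} [Monoid M] [Finite M] (x : M) :
    ∃ n ≠ 0, IsIdempotentElem (x ^ n) := by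
  obtain ⟨i, j, hij, hpow⟩ := Finite.exists_ne_map_eq_of_infinite (x ^ · : ℕ → M)
  wlog hlt : i < j generalizing i j
  · exact this j i hij.symm hpow.symm (by omega)
  obtain ⟨d, rfl⟩ := Nat.exists_eq_add_of_lt hlt
  have habs : ∀ k, x ^ i * (x ^ (d + 1)) ^ k = x ^ i := by
    intro k
    induction k with
    | zero => simp
    | succ k ih => rw [pow_succ, ← mul_assoc, ih, ← pow_add, hpow, add_assoc]
  obtain ⟨r, hr⟩ := Nat.exists_eq_add_of_le (show i ≤ (d + 1) * (i + 1) by nlinarith)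
  refine ⟨(d + 1) * (i + 1), by positivity, ?_⟩
  calc x ^ ((d + 1) * (i + 1)) * x ^ ((d + 1) * (i + 1))
      = x ^ i * (x ^ (d + 1)) ^ (i + 1) * x ^ r := by
        nth_rw 1 [hr]
        rw [pow_add, mul_assoc, ← pow_add, add_comm, pow_add, ← mul_assoc, ← pow_mul]
    _ = x ^ ((d + 1) * (i + 1)) := by rw [habs, ← pow_add, hr]

section
variable {R S : Type*} [CommRing R] [CommRing S]

theorem exists_isUnit_map_eq_of_finite [Finite R] (f : R →+* S) {x : R} (hx : IsUnit (f x)) :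
    ∃ y, IsUnit y ∧ f y = f x := by
  obtain ⟨n, hn, he⟩ := exists_pow_isIdempotentElem x
  set e := x ^ n
  have hfe : f e = 1 :=
    (IsIdempotentElem.iff_eq_one_of_isUnit (by simpa [e] using hx.pow n)).mp (he.map f)
  have hxe : x * x ^ (n - 1) = e := by rw [← pow_succ', Nat.sub_add_cancel (by omega)]
  refine ⟨x * e + (1 - e), IsUnit.of_mul_eq_one (x ^ (n - 1) * e + (1 - e)) ?_, by simp [hfe]⟩
  linear_combination e * hxe + (x * x ^ (n - 1) - x - x ^ (n - 1) + 2) * he.eq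

theorem units_map_surjective_of_finite [Finite R] {f : R →+* S} (hf : Function.Surjective f) :
    Function.Surjective (Units.map (f : R →* S)) := by
  intro v
  obtain ⟨x, hx⟩ := hf v
  obtain ⟨y, ⟨w, rfl⟩, hy⟩ := exists_isUnit_map_eq_of_finite f (x := x) (hx ▸ v.isUnit)
  exact ⟨w, Units.ext (hy.trans hx)⟩

namespace Ideal.Quotient

theorem isUnit_mk_iff_span_singleton_sup_eq_top (I : Ideal R) (u : R) :
    IsUnit (mk I u) ↔ span {u} ⊔ I = ⊤ := by
  rw [← span_singleton_eq_top, ← Set.image_singleton, ← map_span, ← comap_eq_top_iff (f := mk I),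
    comap_map_of_surjective' _ mk_surjective, mk_ker]

theorem factor_eq_iff_forall_mk {I J : Ideal R} (h : I ≤ J) (a : R ⧸ I) (b : R ⧸ J) :
    factor h a = b ↔ ∀ y, mk I y = a → mk J y = b := by
  obtain ⟨x, rfl⟩ := mk_surjective a
  refine ⟨fun hb y hy => ?_, fun hb => hb x rfl⟩
  rw [← factor_mk h, hy, hb]

end Ideal.Quotient

end

theorem MonoidHom.card_fiber_mul_card_of_surjective {G H : Type*} [Group G] [Group H]
    {f : G →* H} (hf : Function.Surjective f) (h : H) :
    Nat.card {g // f g = h} * Nat.card H = Nat.card G := by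
  rw [← f.ker.card_mul_index, Subgroup.index_ker, f.range_eq_top.mpr hf, Subgroup.card_top]
  exact congrArg (· * _) (Nat.card_congr (f.fiberEquivKerOfSurjective hf h))

open Classical in
/-- For a nonzero ideal `𝔫` of `𝓞 K`, `𝔞 ∣ 𝔫` and `u ∈ 𝓞 K`, the number of units
`a` of `𝓞 K ⧸ 𝔫` with `a ≡ u (mod 𝔞)` equals `φ(𝔫)/φ(𝔞)` if `u` is coprime to
`𝔞`, and `0` otherwise. -/
theorem count_units_congruent (K : Type*) [Field K] [NumberField K]
    (𝔫 𝔞 : Ideal (𝓞 K)) (h𝔫 : 𝔫 ≠ ⊥) (h𝔞 : 𝔞 ∣ 𝔫) (u : 𝓞 K) :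
    (Nat.card {a : (𝓞 K ⧸ 𝔫)ˣ //
        ∀ y : 𝓞 K, Ideal.Quotient.mk 𝔫 y = (a : 𝓞 K ⧸ 𝔫) →
          Ideal.Quotient.mk 𝔞 y = Ideal.Quotient.mk 𝔞 u} : ℚ) =
      if Ideal.span {u} ⊔ 𝔞 = ⊤ then
        (Nat.card ((𝓞 K ⧸ 𝔫)ˣ) : ℚ) / (Nat.card ((𝓞 K ⧸ 𝔞)ˣ) : ℚ)
      else 0 := by
  have hle : 𝔫 ≤ 𝔞 := Ideal.le_of_dvd h𝔞
  have : Finite (𝓞 K ⧸ 𝔫) := Ideal.finiteQuotientOfFreeOfNeBot 𝔫 h𝔫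
  have : Finite (𝓞 K ⧸ 𝔞) := Finite.of_surjective _ (Ideal.Quotient.factor_surjective hle)
  simp_rw [← Ideal.Quotient.factor_eq_iff_forall_mk hle]
  split_ifs with hu
  · obtain ⟨v, hv⟩ := (Ideal.Quotient.isUnit_mk_iff_span_singleton_sup_eq_top 𝔞 u).mpr hu
    have hsurj := units_map_surjective_of_finite (Ideal.Quotient.factor_surjective hle)
    rw [eq_div_iff (Nat.cast_ne_zero.mpr Nat.card_pos.ne'),
      ← MonoidHom.card_fiber_mul_card_of_surjective hsurj v, Nat.cast_mul]
    congr 2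
    exact Nat.card_congr (Equiv.subtypeEquivRight fun a => by rw [← hv, Units.ext_iff]; rfl)
  · rw [Nat.cast_eq_zero, Nat.card_eq_zero]
    refine .inl ⟨fun ⟨a, ha⟩ => hu ?_⟩
    rw [← Ideal.Quotient.isUnit_mk_iff_span_singleton_sup_eq_top, ← ha]
    exact a.isUnit.map _
end
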